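/- arXiv:2002.10918 — 3 statements merged into one kernel-verified Lean document; each statement's English description precedes it below -/
import Mathlib

section
/- Let M₁ and M₂ be two disjoint separators in an open annulus A. Then either M₁ ⊆ A_L(M₂) or M₁ ⊆ A_R(M₂), where A_L(M₂) and A_R(M₂) are the two annular components of A − M₂ containing the left and right ends respectively. Moreover, M₁ ⊆ A_L(M₂) implies M₂ ⊆ A_R(M₁). -/
/- Model of the open annulus A = S¹ × (0,1), with universal cover ℝ × (0,1). -/

noncomputable section
open Set Filter Topology MeasureTheory

/-- The open interval (0,1) as a type. -/
abbrev IooT : Type := ↥(Set.Ioo (0:ℝ) 1)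

/-- The open annulus `A = S¹ × (0,1)`. -/
abbrev Ann : Type := AddCircle (1:ℝ) × IooT

/-- The universal cover `Ã = ℝ × (0,1)` of the open annulus. -/
abbrev Cov : Type := ℝ × IooT

/-- The covering projection `Ã → A`. -/
def proj : Cov → Ann := fun z => ((z.1 : AddCircle (1:ℝ)), z.2)

/-- An arc (curve) in `A` connecting the left end (y → 0) to the right end (y → 1). -/
def ConnectsEnds (γ : ℝ → Ann) : Prop :=
  Continuous γ ∧ Filter.Tendsto (fun t => ((γ t).2 : ℝ)) Filter.atBot (nhds 0) ∧
    Filter.Tendsto (fun t => ((γ t).2 : ℝ)) Filter.atTop (nhds 1)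

/-- A subset of the annulus is separating (essential) if every arc connecting
the two ends of `A` meets it. -/
def Separating (M : Set Ann) : Prop := ∀ γ : ℝ → Ann, ConnectsEnds γ → ∃ t, γ t ∈ M

/-- A separator: a compact, connected, separating subset of the annulus. -/
def IsSeparator (M : Set Ann) : Prop := IsCompact M ∧ IsConnected M ∧ Separating M

/-- A set contains the left end of the annulus. -/
def ContainsLeftEnd (U : Set Ann) : Prop := ∃ ε > (0:ℝ), ∀ p : Ann, ((p.2 : ℝ) < ε) → p ∈ U

/-- A set contains the right end of the annulus. -/
def ContainsRightEnd (U : Set Ann) : Prop := ∃ ε > (0:ℝ), ∀ p : Ann, (1 - ε < (p.2 : ℝ)) → p ∈ U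

/-- `U` is a connected component of the complement of `M`. -/
def IsComponentOfCompl (M U : Set Ann) : Prop := ∃ p, p ∉ M ∧ U = connectedComponentIn Mᶜ p

/-- `U` is the component of `A − M` containing the left end (`A_L(M)`). -/
def IsLeftComponent (M U : Set Ann) : Prop := IsComponentOfCompl M U ∧ ContainsLeftEnd U

/-- `U` is the component of `A − M` containing the right end (`A_R(M)`). -/
def IsRightComponent (M U : Set Ann) : Prop := IsComponentOfCompl M U ∧ ContainsRightEnd U

/-!
Both claims are read off the vertical line `u ↦ (0, sigmoid u)`, which connects the two ends.
A separator `M` has a first and a last point on this line; below the first one the line runs in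
`A_L(M)`, above the last one in `A_R(M)`. If the connected set `M₁` lay in neither `A_L(M₂)`
nor `A_R(M₂)`, it would miss the line outside the stretch between the first and the last point
of `M₂`; replacing that stretch by a path inside the connected set `M₂ ⊆ A − M₁` would give an
arc joining the ends and avoiding `M₁`. The same detour, now through `A_L(M₁)`, rules out
`M₁ ⊆ A_L(M₂)` together with `M₂ ⊆ A_L(M₁)`, and through `A_L(M) ∪ A_R(M)` it shows that these
two components are distinct.
-/

instance : LocallyPathConnectedSpace (AddCircle (1:ℝ)) :=
  QuotientAddGroup.isOpenQuotientMap_mk.isQuotientMap.locallyPathConnectedSpace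

instance : LocallyPathConnectedSpace IooT := isOpen_Ioo.locallyPathConnectedSpace

theorem IsOpen.joinedIn_of_isPreconnected {X : Type*} [TopologicalSpace X]
    [LocallyPathConnectedSpace X] {F S : Set X} (hF : IsOpen F) (hS : IsPreconnected S)
    (hSF : S ⊆ F) {x y : X} (hx : x ∈ S) (hy : y ∈ S) : JoinedIn F x y := by
  have hC : IsPathConnected (connectedComponentIn F x) :=
    hF.connectedComponentIn.isConnected_iff_isPathConnected.mp
      (isConnected_connectedComponentIn_iff.mpr (hSF hx))
  exact (hC.joinedIn x (mem_connectedComponentIn (hSF hx)) y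
    (hS.subset_connectedComponentIn hx hSF hy)).mono (connectedComponentIn_subset F x)

def detour {X : Type*} [TopologicalSpace X] (c : ℝ → X) {s t : ℝ} (γ : Path (c s) (c t))
    (u : ℝ) : X :=
  if u ≤ s then c u else if u ≤ t then γ.extend ((u - s) / (t - s)) else c u

theorem Continuous.detour {X : Type*} [TopologicalSpace X] {c : ℝ → X} (hc : Continuous c)
    {s t : ℝ} (hst : s ≤ t) (γ : Path (c s) (c t)) : Continuous (detour c γ) := by
  have hmid : Continuous fun u => γ.extend ((u - s) / (t - s)) :=
    γ.continuous_extend.comp (by fun_prop)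
  have hmid_t : γ.extend ((t - s) / (t - s)) = c t := by
    rcases hst.eq_or_lt with rfl | hlt
    · simp -- `0 / 0 = 0`, so the degenerate detour stays at `c s`
    · rw [div_self (sub_ne_zero.mpr hlt.ne'), Path.extend_one]
  refine Continuous.if_le hc (Continuous.if_le hmid hc continuous_id continuous_const ?_)
    continuous_id continuous_const ?_
  · rintro u rfl
    exact hmid_t
  · rintro u rfl
    simp [hst]

theorem ConnectsEnds.detour {c : ℝ → Ann} (hc : ConnectsEnds c) {s t : ℝ} (hst : s ≤ t)
    (γ : Path (c s) (c t)) : ConnectsEnds (detour c γ) := by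
  obtain ⟨hcont, hbot, htop⟩ := hc
  refine ⟨hcont.detour hst γ, hbot.congr' ?_, htop.congr' ?_⟩
  · filter_upwards [eventually_le_atBot s] with u hu
    simp [_root_.detour, hu]
  · filter_upwards [eventually_gt_atTop t] with u hu
    simp [_root_.detour, not_le.mpr hu, not_le.mpr (hst.trans_lt hu)]

theorem Separating.exists_mem_of_joinedIn {M : Set Ann} (hM : Separating M) {c : ℝ → Ann}
    (hc : ConnectsEnds c) {s t : ℝ} (hst : s ≤ t) (hJ : JoinedIn Mᶜ (c s) (c t)) :
    ∃ u, (u < s ∨ t < u) ∧ c u ∈ M := by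
  obtain ⟨τ, hτ⟩ := hM _ (hc.detour hst hJ.somePath)
  unfold detour at hτ
  split_ifs at hτ with hτs hτt
  · rcases hτs.lt_or_eq with hlt | rfl
    · exact ⟨τ, Or.inl hlt, hτ⟩
    · exact absurd hτ hJ.mem.1
  · obtain ⟨σ, hσ⟩ : hJ.somePath.extend ((τ - s) / (t - s)) ∈ range hJ.somePath :=
      hJ.somePath.extend_range ▸ mem_range_self _
    exact absurd hτ (hσ ▸ hJ.somePath_mem σ)
  · exact ⟨τ, Or.inr (not_le.mp hτt), hτ⟩

def vertical (u : ℝ) : Ann :=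
  (0, ⟨Real.sigmoid u, Real.sigmoid_pos u, Real.sigmoid_lt_one u⟩)

theorem continuous_vertical : Continuous vertical :=
  continuous_const.prodMk (continuous_sigmoid.subtype_mk _)

theorem connectsEnds_vertical : ConnectsEnds vertical :=
  ⟨continuous_vertical, Real.tendsto_sigmoid_atBot, Real.tendsto_sigmoid_atTop⟩

namespace IsComponentOfCompl

variable {M U : Set Ann}

theorem isPreconnected (hU : IsComponentOfCompl M U) : IsPreconnected U := by
  obtain ⟨p, -, rfl⟩ := hU
  exact isPreconnected_connectedComponentIn

theorem subset_compl (hU : IsComponentOfCompl M U) : U ⊆ Mᶜ := by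
  obtain ⟨p, -, rfl⟩ := hU
  exact connectedComponentIn_subset _ _

theorem subset_of_inter_nonempty (hU : IsComponentOfCompl M U) {S : Set Ann}
    (hS : IsPreconnected S) (hSM : S ⊆ Mᶜ) (hSU : (S ∩ U).Nonempty) : S ⊆ U := by
  obtain ⟨p, -, rfl⟩ := hU
  obtain ⟨x, hxS, hxU⟩ := hSU
  rw [connectedComponentIn_eq hxU]
  exact hS.subset_connectedComponentIn hxS hSM

theorem subset_or_disjoint (hU : IsComponentOfCompl M U) {S : Set Ann}
    (hS : IsPreconnected S) (hSM : S ⊆ Mᶜ) : S ⊆ U ∨ Disjoint S U := by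
  by_cases h : Disjoint S U
  · exact Or.inr h
  · exact Or.inl (hU.subset_of_inter_nonempty hS hSM (not_disjoint_iff_nonempty_inter.mp h))

end IsComponentOfCompl

theorem IsLeftComponent.exists_first_vertical_mem {M L : Set Ann} (hM : IsClosed M)
    (hsep : Separating M) (hL : IsLeftComponent M L) :
    ∃ s, vertical s ∈ M ∧ ∀ u < s, vertical u ∈ L := by
  obtain ⟨hLc, ε, hε, hεL⟩ := hL
  have hnear : ∀ᶠ u in atBot, vertical u ∈ L :=
    (Real.tendsto_sigmoid_atBot.eventually_lt_const hε).mono fun u hu => hεL _ hu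
  set T := vertical ⁻¹' M
  have hne : T.Nonempty := hsep vertical connectsEnds_vertical
  have hbdd : BddBelow T := by
    obtain ⟨u₀, hu₀⟩ := eventually_atBot.mp hnear
    exact ⟨u₀, fun u hu => le_of_not_gt fun h => hLc.subset_compl (hu₀ u h.le) hu⟩
  refine ⟨sInf T, (hM.preimage continuous_vertical).csInf_mem hne hbdd, fun u hu => ?_⟩
  have hout : vertical '' Iio (sInf T) ⊆ Mᶜ := by
    rintro _ ⟨v, hv, rfl⟩ hvM
    exact not_le.mpr hv (csInf_le hbdd hvM)
  obtain ⟨v, hvL, hv⟩ := (hnear.and (eventually_lt_atBot (sInf T))).exists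
  exact hLc.subset_of_inter_nonempty (isPreconnected_Iio.image _ continuous_vertical.continuousOn)
    hout ⟨_, mem_image_of_mem _ hv, hvL⟩ (mem_image_of_mem _ hu)

theorem IsRightComponent.exists_last_vertical_mem {M R : Set Ann} (hM : IsClosed M)
    (hsep : Separating M) (hR : IsRightComponent M R) :
    ∃ t, vertical t ∈ M ∧ ∀ u, t < u → vertical u ∈ R := by
  obtain ⟨hRc, ε, hε, hεR⟩ := hR
  have hnear : ∀ᶠ u in atTop, vertical u ∈ R :=
    (Real.tendsto_sigmoid_atTop.eventually_const_lt (by linarith : 1 - ε < 1)).mono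
      fun u hu => hεR _ hu
  set T := vertical ⁻¹' M
  have hne : T.Nonempty := hsep vertical connectsEnds_vertical
  have hbdd : BddAbove T := by
    obtain ⟨u₀, hu₀⟩ := eventually_atTop.mp hnear
    exact ⟨u₀, fun u hu => le_of_not_gt fun h => hRc.subset_compl (hu₀ u h.le) hu⟩
  refine ⟨sSup T, (hM.preimage continuous_vertical).csSup_mem hne hbdd, fun u hu => ?_⟩
  have hout : vertical '' Ioi (sSup T) ⊆ Mᶜ := by
    rintro _ ⟨v, hv, rfl⟩ hvM
    exact not_le.mpr hv (le_csSup hbdd hvM)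
  obtain ⟨v, hvR, hv⟩ := (hnear.and (eventually_gt_atTop (sSup T))).exists
  exact hRc.subset_of_inter_nonempty (isPreconnected_Ioi.image _ continuous_vertical.continuousOn)
    hout ⟨_, mem_image_of_mem _ hv, hvR⟩ (mem_image_of_mem _ hu)

theorem IsLeftComponent.disjoint_of_isRightComponent {M L R : Set Ann} (hM : IsClosed M)
    (hsep : Separating M) (hL : IsLeftComponent M L) (hR : IsRightComponent M R) :
    Disjoint L R := by
  refine Set.disjoint_left.mpr fun x hxL hxR => ?_
  obtain ⟨s, hsM, hsL⟩ := hL.exists_first_vertical_mem hM hsep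
  obtain ⟨t, htM, htR⟩ := hR.exists_last_vertical_mem hM hsep
  have hst : s ≤ t := le_of_not_gt fun hts => hL.1.subset_compl (hsL t hts) htM
  have hJ : JoinedIn Mᶜ (vertical (s - 1)) (vertical (t + 1)) :=
    hM.isOpen_compl.joinedIn_of_isPreconnected
      (hL.1.isPreconnected.union x hxL hxR hR.1.isPreconnected)
      (union_subset hL.1.subset_compl hR.1.subset_compl)
      (Or.inl (hsL _ (by linarith))) (Or.inr (htR _ (by linarith)))
  obtain ⟨u, hu | hu, huM⟩ := hsep.exists_mem_of_joinedIn connectsEnds_vertical (by linarith) hJ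
  · exact hL.1.subset_compl (hsL u (by linarith)) huM
  · exact hR.1.subset_compl (htR u (by linarith)) huM

theorem IsSeparator.subset_left_or_right {M₁ M₂ L₂ R₂ : Set Ann} (h₁ : IsSeparator M₁)
    (h₂ : IsSeparator M₂) (hdisj : Disjoint M₁ M₂) (hL₂ : IsLeftComponent M₂ L₂)
    (hR₂ : IsRightComponent M₂ R₂) : M₁ ⊆ L₂ ∨ M₁ ⊆ R₂ := by
  have hM₁ : M₁ ⊆ M₂ᶜ := hdisj.subset_compl_right
  rcases hL₂.1.subset_or_disjoint h₁.2.1.isPreconnected hM₁ with hsub | hM₁L₂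
  · exact Or.inl hsub
  rcases hR₂.1.subset_or_disjoint h₁.2.1.isPreconnected hM₁ with hsub | hM₁R₂
  · exact Or.inr hsub
  exfalso
  obtain ⟨s, hsM, hsL⟩ := hL₂.exists_first_vertical_mem h₂.1.isClosed h₂.2.2
  obtain ⟨t, htM, htR⟩ := hR₂.exists_last_vertical_mem h₂.1.isClosed h₂.2.2
  have hst : s ≤ t := le_of_not_gt fun hts => hL₂.1.subset_compl (hsL t hts) htM
  have hJ : JoinedIn M₁ᶜ (vertical s) (vertical t) :=
    h₁.1.isClosed.isOpen_compl.joinedIn_of_isPreconnected h₂.2.1.isPreconnected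
      hdisj.subset_compl_left hsM htM
  obtain ⟨u, hu | hu, huM⟩ := h₁.2.2.exists_mem_of_joinedIn connectsEnds_vertical hst hJ
  · exact Set.disjoint_left.mp hM₁L₂ huM (hsL u hu)
  · exact Set.disjoint_left.mp hM₁R₂ huM (htR u hu)

theorem IsSeparator.subset_right_of_subset_left {M₁ M₂ L₁ R₁ L₂ R₂ : Set Ann}
    (h₁ : IsSeparator M₁) (h₂ : IsSeparator M₂) (hdisj : Disjoint M₁ M₂)
    (hL₂ : IsLeftComponent M₂ L₂) (hR₂ : IsRightComponent M₂ R₂)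
    (hL₁ : IsLeftComponent M₁ L₁) (hR₁ : IsRightComponent M₁ R₁) (hM₁L₂ : M₁ ⊆ L₂) :
    M₂ ⊆ R₁ := by
  refine (h₂.subset_left_or_right h₁ hdisj.symm hL₁ hR₁).resolve_left fun hM₂L₁ => ?_
  obtain ⟨s, -, hsL⟩ := hL₁.exists_first_vertical_mem h₁.1.isClosed h₁.2.2
  obtain ⟨t, htM, htR⟩ := hR₂.exists_last_vertical_mem h₂.1.isClosed h₂.2.2
  have hs' : min (s - 1) t < s := (min_le_left _ _).trans_lt (by linarith)
  have hJ : JoinedIn M₁ᶜ (vertical (min (s - 1) t)) (vertical t) :=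
    h₁.1.isClosed.isOpen_compl.joinedIn_of_isPreconnected hL₁.1.isPreconnected
      hL₁.1.subset_compl (hsL _ hs') (hM₂L₁ htM)
  obtain ⟨u, hu | hu, huM⟩ :=
    h₁.2.2.exists_mem_of_joinedIn connectsEnds_vertical (min_le_right _ _) hJ
  · exact hL₁.1.subset_compl (hsL u (hu.trans hs')) huM
  · exact Set.disjoint_left.mp (hL₂.disjoint_of_isRightComponent h₂.1.isClosed h₂.2.2 hR₂)
      (hM₁L₂ huM) (htR u hu)

/-- If `M₁, M₂` are disjoint separators in the open annulus `A`, then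
either `M₁ ⊆ A_L(M₂)` or `M₁ ⊆ A_R(M₂)`; moreover `M₁ ⊆ A_L(M₂)` implies
`M₂ ⊆ A_R(M₁)`. -/
theorem ordering_of_disjoint_separators (M₁ M₂ L₁ R₁ L₂ R₂ : Set Ann)
    (h₁ : IsSeparator M₁) (h₂ : IsSeparator M₂) (hdisj : Disjoint M₁ M₂)
    (hL₂ : IsLeftComponent M₂ L₂) (hR₂ : IsRightComponent M₂ R₂)
    (hL₁ : IsLeftComponent M₁ L₁) (hR₁ : IsRightComponent M₁ R₁) :
    (M₁ ⊆ L₂ ∨ M₁ ⊆ R₂) ∧ (M₁ ⊆ L₂ → M₂ ⊆ R₁) :=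
  ⟨h₁.subset_left_or_right h₂ hdisj hL₂ hR₂,
    h₁.subset_right_of_subset_left h₂ hdisj hL₂ hR₂ hL₁ hR₁⟩
end
end

section
/- Let f be a homeomorphism of an annular continuum K in an annulus such that the rotation set σ(f,K) is a single number {α}. Then the sequence of functions x ↦ (p₁(f̃ⁿ(x̃)) − p₁(x̃))/n converges uniformly on π⁻¹(K) to the constant α; in particular, every point of K has rotation number α under f. -/
/- Model of the open annulus A = S¹ × (0,1), with universal cover ℝ × (0,1). -/

noncomputable section
open Set Filter Topology MeasureTheory

instance : Fact ((0:ℝ) < 1) := ⟨one_pos⟩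

/-- `K ⊆ A` has exactly two complementary connected components. -/
def HasTwoComplComponents (K : Set Ann) : Prop :=
  ∃ L R : Set Ann, IsConnected L ∧ IsConnected R ∧ Disjoint L R ∧ Kᶜ = L ∪ R

/-- An essential annular continuum: a compact connected separating set whose
complement in `A` has exactly two components. -/
def IsAnnularContinuum (K : Set Ann) : Prop :=
  IsCompact K ∧ IsConnected K ∧ Separating K ∧ HasTwoComplComponents K

/-- The rotation set `σ(f,K)`: the set of integrals `∫ φ dμ` over all `f`-invariant
Borel probability measures `μ` supported on `K`, where `φ` lifts to the displacement
`p₁ ∘ f̃ − p₁`. -/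
def rotSet (f : Ann → Ann) (φ : Ann → ℝ) (K : Set Ann) : Set ℝ :=
  {r | ∃ μ : Measure Ann, IsProbabilityMeasure μ ∧ μ.map f = μ ∧ μ Kᶜ = 0 ∧
    r = ∫ x, φ x ∂μ}

/-! The displacement `p₁(f̃ⁿ(x̃)) − p₁(x̃)` is the Birkhoff sum of `φ` along the orbit of `π(x̃)`,
so it suffices that the Birkhoff averages of `φ` converge to `α` uniformly on `K`. If they did not,
there would be orbit segments in `K` of lengths `nₖ → ∞` whose averages stay `ε` away from `α`.
The corresponding empirical measures have a weak-* cluster point, which is `f`-invariant because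
the empirical measures are invariant up to `O(1/nₖ)` (Krylov–Bogolyubov) and is carried by `K`;
its integral of `φ` is still `ε` away from `α`, contradicting `σ(f,K) = {α}`. -/

open scoped ENNReal BoundedContinuousFunction

section BirkhoffSum

variable {X Y M : Type*} [AddCommMonoid M] {π : Y → X} {S : Y → Y} {T : X → X}

theorem Function.Semiconj.birkhoffSum_comp (h : Function.Semiconj π S T) (g : X → M) (n : ℕ)
    (y : Y) : birkhoffSum S (g ∘ π) n y = birkhoffSum T g n (π y) := by
  simp only [birkhoffSum, Function.comp_apply, (h.iterate_right _).eq]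

theorem Function.Semiconj.birkhoffAverage_comp (R : Type*) [DivisionSemiring R] [Module R M]
    (h : Function.Semiconj π S T) (g : X → M) (n : ℕ) (y : Y) :
    birkhoffAverage R S (g ∘ π) n y = birkhoffAverage R T g n (π y) := by
  rw [birkhoffAverage, birkhoffAverage, h.birkhoffSum_comp]

theorem birkhoffSum_sub_comp_eq_sub {α G : Type*} [AddCommGroup G] (T : α → α) (c : α → G)
    (n : ℕ) (x : α) :
    birkhoffSum T (fun y => c (T y) - c y) n x = c (T^[n] x) - c x := by
  simp only [birkhoffSum, ← Function.iterate_succ_apply' T]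
  exact Finset.sum_range_sub (fun k => c (T^[k] x)) n

end BirkhoffSum

section EmpiricalMeasure

variable {Y : Type*} [MeasurableSpace Y]

def empiricalMeasure (T : Y → Y) (n : ℕ) (y : Y) : Measure Y :=
  (n : ℝ≥0∞)⁻¹ • ∑ k ∈ Finset.range n, Measure.dirac (T^[k] y)

theorem isProbabilityMeasure_empiricalMeasure (T : Y → Y) {n : ℕ} (hn : n ≠ 0) (y : Y) :
    IsProbabilityMeasure (empiricalMeasure T n y) := by
  constructor
  simp [empiricalMeasure,
    ENNReal.inv_mul_cancel (Nat.cast_ne_zero.2 hn) (ENNReal.natCast_ne_top n)]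

theorem integral_empiricalMeasure (T : Y → Y) (n : ℕ) (y : Y) {g : Y → ℝ}
    (hg : StronglyMeasurable g) :
    ∫ x, g x ∂empiricalMeasure T n y = birkhoffAverage ℝ T g n y := by
  rw [empiricalMeasure, integral_smul_measure,
    integral_finsetSum_measure fun k _ => integrable_dirac' hg enorm_lt_top]
  simp [integral_dirac' _ _ hg, birkhoffAverage, birkhoffSum]

theorem tendsto_integral_comp_sub_integral_empiricalMeasure [TopologicalSpace Y]
    [OpensMeasurableSpace Y] {T : Y → Y} (hT : Continuous T) {ι : Type*} {l : Filter ι}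
    {n : ι → ℕ} (hn : Tendsto n l atTop) (y : ι → Y) (g : Y →ᵇ ℝ) :
    Tendsto (fun i => ∫ x, g (T x) ∂empiricalMeasure T (n i) (y i) -
      ∫ x, g x ∂empiricalMeasure T (n i) (y i)) l (𝓝 0) := by
  have hgT : StronglyMeasurable (g ∘ T) := (g.continuous.comp hT).stronglyMeasurable
  simp_rw [← Function.comp_apply (f := g) (g := T), integral_empiricalMeasure T _ _ hgT,
    integral_empiricalMeasure T _ _ g.continuous.stronglyMeasurable,
    (Function.Commute.refl T).birkhoffAverage_comp ℝ, birkhoffAverage_apply_sub_birkhoffAverage]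
  have hbound : Tendsto (fun i => (n i : ℝ)⁻¹ * (2 * ‖g‖)) l (𝓝 0) := by
    simpa using (tendsto_inv_atTop_zero.comp (tendsto_natCast_atTop_atTop.comp hn)).mul_const
      (2 * ‖g‖)
  refine squeeze_zero_norm (fun i => ?_) hbound
  rw [norm_smul, norm_inv, Real.norm_natCast, ← dist_eq_norm]
  exact mul_le_mul_of_nonneg_left (g.dist_le_two_norm _ _) (by positivity)

end EmpiricalMeasure

theorem eq_of_mapClusterPt_of_tendsto {X ι : Type*} [TopologicalSpace X] [T2Space X]
    {l : Filter ι} {u : ι → X} {a b : X} (ha : MapClusterPt a l u) (hb : Tendsto u l (𝓝 b)) :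
    a = b := by
  by_contra hne
  exact (ClusterPt.mono ha hb).ne (disjoint_nhds_nhds.2 hne).eq_bot

section KrylovBogolyubov

variable {Y : Type*} [TopologicalSpace Y] [MeasurableSpace Y] [BorelSpace Y]
  [HasOuterApproxClosed Y] {T : Y → Y}

theorem map_eq_of_mapClusterPt_of_tendsto_integral_comp_sub (hT : Continuous T) {ι : Type*}
    {l : Filter ι} {μ : ι → ProbabilityMeasure Y} {ν : ProbabilityMeasure Y}
    (hν : MapClusterPt ν l μ)
    (hμ : ∀ g : Y →ᵇ ℝ, Tendsto (fun i => ∫ y, g (T y) ∂μ i - ∫ y, g y ∂μ i) l (𝓝 0)) :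
    (ν : Measure Y).map T = ν := by
  have := Measure.isProbabilityMeasure_map (μ := (ν : Measure Y)) hT.aemeasurable
  refine ext_of_forall_integral_eq_of_IsFiniteMeasure fun g => ?_
  rw [integral_map hT.aemeasurable g.continuous.aestronglyMeasurable, ← sub_eq_zero]
  have hcont : Continuous fun m : ProbabilityMeasure Y => ∫ y, g (T y) ∂m - ∫ y, g y ∂m :=
    (ProbabilityMeasure.continuous_integral_boundedContinuousFunction
      (g.compContinuous ⟨T, hT⟩)).sub
      (ProbabilityMeasure.continuous_integral_boundedContinuousFunction g)
  exact eq_of_mapClusterPt_of_tendsto (hcont.continuousAt.mapClusterPt hν) (hμ g)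

theorem tendstoUniformly_birkhoffAverage_of_forall_integral_eq [T2Space Y] [CompactSpace Y]
    (hT : Continuous T) {φ : Y → ℝ} (hφ : Continuous φ) {α : ℝ}
    (h : ∀ μ : Measure Y, IsProbabilityMeasure μ → μ.map T = μ → ∫ y, φ y ∂μ = α) :
    TendstoUniformly (birkhoffAverage ℝ T φ) (fun _ => α) atTop := by
  by_contra hconv
  rw [Metric.tendstoUniformly_iff] at hconv
  push Not at hconv
  obtain ⟨ε, hε, hfreq⟩ := hconv
  obtain ⟨n, hn_mono, hn⟩ :=
    extraction_of_frequently_atTop (hfreq.and_eventually (eventually_ne_atTop 0))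
  choose y hy using fun k => (hn k).1
  let μ k : ProbabilityMeasure Y :=
    ⟨empiricalMeasure T (n k) (y k), isProbabilityMeasure_empiricalMeasure T (hn k).2 _⟩
  obtain ⟨ν, -, hν⟩ := isCompact_univ.exists_mapClusterPt (f := atTop) (u := μ) (by simp)
  have hinv : (ν : Measure Y).map T = ν :=
    map_eq_of_mapClusterPt_of_tendsto_integral_comp_sub hT hν
      (tendsto_integral_comp_sub_integral_empiricalMeasure hT hn_mono.tendsto_atTop y)
  have hdev : ε ≤ dist α (∫ x, φ x ∂ν) := by
    have hclosed : IsClosed {m : ProbabilityMeasure Y | ε ≤ dist α (∫ x, φ x ∂m)} :=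
      isClosed_le continuous_const (continuous_const.dist
        (ProbabilityMeasure.continuous_integral_continuousMap (⟨φ, hφ⟩ : C(Y, ℝ))))
    refine hclosed.mem_of_mapClusterPt hν (Eventually.of_forall fun k => ?_)
    change ε ≤ dist α (∫ x, φ x ∂empiricalMeasure T (n k) (y k))
    rw [integral_empiricalMeasure T _ _ hφ.stronglyMeasurable]
    exact hy k
  rw [h ν inferInstance hinv, dist_self] at hdev
  exact hε.not_ge hdev

end KrylovBogolyubov

theorem tendstoUniformlyOn_birkhoffAverage_of_forall_integral_eq {X : Type*}
    [TopologicalSpace X] [T2Space X] [TopologicalSpace.PseudoMetrizableSpace X]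
    [MeasurableSpace X] [BorelSpace X] {T : X → X} (hT : Continuous T) {K : Set X}
    (hK : IsCompact K) (hTK : MapsTo T K K) {φ : X → ℝ} (hφ : Continuous φ) {α : ℝ}
    (h : ∀ μ : Measure X, IsProbabilityMeasure μ → μ.map T = μ → μ Kᶜ = 0 →
      ∫ x, φ x ∂μ = α) :
    TendstoUniformlyOn (birkhoffAverage ℝ T φ) (fun _ => α) atTop K := by
  have := isCompact_iff_compactSpace.1 hK
  have hval : MeasurableEmbedding ((↑) : K → X) := .subtype_coe hK.isClosed.measurableSet
  have hsemi : Function.Semiconj ((↑) : K → X) hTK.restrict T := fun _ => rfl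
  rw [tendstoUniformlyOn_iff_tendstoUniformly_comp_coe]
  simp_rw [← hsemi.birkhoffAverage_comp ℝ]
  refine tendstoUniformly_birkhoffAverage_of_forall_integral_eq
    (hT.continuousOn.mapsToRestrict hTK) (hφ.comp continuous_subtype_val) fun ν _ hν => ?_
  have hmap : (ν.map (↑)).map T = ν.map ((↑) : K → X) := by
    rw [Measure.map_map hT.measurable hval.measurable, ← hsemi.comp_eq,
      ← Measure.map_map hval.measurable (hT.continuousOn.mapsToRestrict hTK).measurable, hν]
  have hK0 : ν.map ((↑) : K → X) Kᶜ = 0 := by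
    rw [hval.map_apply]; simp
  rw [← h _ (Measure.isProbabilityMeasure_map hval.measurable.aemeasurable) hmap hK0,
    hval.integral_map]
  rfl

theorem displacement_div_eq_birkhoffAverage {f : Ann → Ann} {ft : Cov → Cov}
    (hlift : ∀ z : Cov, proj (ft z) = f (proj z)) {φ : Ann → ℝ}
    (hφl : ∀ z : Cov, φ (proj z) = (ft z).1 - z.1) (n : ℕ) (z : Cov) :
    ((ft^[n] z).1 - z.1) / n = birkhoffAverage ℝ f φ n (proj z) := by
  have hsemi : Function.Semiconj proj ft f := hlift
  rw [← hsemi.birkhoffAverage_comp ℝ, birkhoffAverage, smul_eq_mul, inv_mul_eq_div]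
  congr 1
  rw [← birkhoffSum_sub_comp_eq_sub]
  exact congrArg (birkhoffSum ft · n z) (funext hφl).symm

theorem rotSet_singleton_uniform_convergence_general (f : Ann ≃ₜ Ann) (K : Set Ann)
    (hK : IsAnnularContinuum K) (hfK : f '' K = K)
    (ft : Cov → Cov) (hlift : ∀ z : Cov, proj (ft z) = f (proj z))
    (φ : Ann → ℝ) (hφ : Continuous φ) (hφl : ∀ z : Cov, φ (proj z) = (ft z).1 - z.1)
    (α : ℝ) (hα : rotSet f φ K = {α}) :
    TendstoUniformlyOn (fun (n : ℕ) (z : Cov) => ((ft^[n] z).1 - z.1) / n)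
      (fun _ => α) Filter.atTop (proj ⁻¹' K) ∧
    ∀ z ∈ proj ⁻¹' K,
      Filter.Tendsto (fun n : ℕ => ((ft^[n] z).1 - z.1) / n) Filter.atTop (nhds α) := by
  have hunif : TendstoUniformlyOn (birkhoffAverage ℝ f φ) (fun _ => α) atTop K :=
    tendstoUniformlyOn_birkhoffAverage_of_forall_integral_eq f.continuous hK.1
      (mapsTo_iff_image_subset.2 hfK.subset) hφ fun μ hμ hinv hK0 =>
        (hα ▸ ⟨μ, hμ, hinv, hK0, rfl⟩ : ∫ x, φ x ∂μ ∈ ({α} : Set ℝ))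
  have hlifted : TendstoUniformlyOn (fun (n : ℕ) (z : Cov) => ((ft^[n] z).1 - z.1) / n)
      (fun _ => α) atTop (proj ⁻¹' K) := by
    simpa only [Function.comp_def, displacement_div_eq_birkhoffAverage hlift hφl] using
      hunif.comp proj
  exact ⟨hlifted, fun z hz => hlifted.tendsto_at hz⟩

/-- Franks–Le Calvez, Corollary 3.1. If the rotation set of `f` on an
annular continuum `K` is a single number `{α}`, then the Birkhoff quotients
`(p₁(f̃ⁿ(x̃)) − p₁(x̃))/n` converge uniformly on `π⁻¹(K)` to the constant `α`; in
particular every point of `K` has rotation number `α` under `f`. -/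
theorem rotSet_singleton_uniform_convergence (f : Ann ≃ₜ Ann) (K : Set Ann)
    (hK : IsAnnularContinuum K) (hfK : f '' K = K)
    (ft : Cov → Cov) (hft : Continuous ft) (hlift : ∀ z : Cov, proj (ft z) = f (proj z))
    (φ : Ann → ℝ) (hφ : Continuous φ) (hφl : ∀ z : Cov, φ (proj z) = (ft z).1 - z.1)
    (α : ℝ) (hα : rotSet f φ K = {α}) :
    TendstoUniformlyOn (fun (n : ℕ) (z : Cov) => ((ft^[n] z).1 - z.1) / n)
      (fun _ => α) Filter.atTop (proj ⁻¹' K) ∧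
    ∀ z ∈ proj ⁻¹' K,
      Filter.Tendsto (fun n : ℕ => ((ft^[n] z).1 - z.1) / n) Filter.atTop (nhds α) :=
  rotSet_singleton_uniform_convergence_general f K hK hfK ft hlift φ hφ hφl α hα
end
end

section
/- Let f be an orientation-preserving homeomorphism of the circle with irrational rotation number ρ(f) = r, semiconjugate to the irrational rotation R_r via a monotone degree-one map h (h ∘ f = R_r ∘ h). If g commutes with f and has rotation number 0, and e commutes with f, then ρ(g ∘ e) = ρ(e); more generally, rotation number restricted to the centralizer of f is a group homomorphism to ℝ/ℤ. In particular, a product of elements of the centralizer each with rotation number 0 has rotation number 0. -/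
noncomputable section
open CircleDeg1Lift

/-- An irrational number together with `1` generates a dense subgroup of `ℝ`. -/
lemma aux_dense_of_irrational {t : ℝ} (ht : Irrational t) :
    Dense ((AddSubgroup.closure ({1, t} : Set ℝ) : AddSubgroup ℝ) : Set ℝ) := by
  rcases AddSubgroup.dense_or_cyclic (AddSubgroup.closure ({1, t} : Set ℝ)) with h | ⟨a, ha⟩
  · exact h
  · exfalso
    have h1 : (1 : ℝ) ∈ AddSubgroup.closure ({1, t} : Set ℝ) :=
      AddSubgroup.subset_closure (by simp)
    have h2 : t ∈ AddSubgroup.closure ({1, t} : Set ℝ) :=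
      AddSubgroup.subset_closure (by simp)
    rw [ha, AddSubgroup.mem_closure_singleton] at h1 h2
    obtain ⟨n, hn⟩ := h1
    obtain ⟨m, hm⟩ := h2
    have hn0 : (n : ℝ) ≠ 0 := by
      intro h
      rw [zsmul_eq_mul, h, zero_mul] at hn
      exact one_ne_zero hn.symm
    have : t = (m : ℝ) / (n : ℝ) := by
      rw [zsmul_eq_mul] at hn hm
      have ha' : a = 1 / (n : ℝ) := by field_simp; linarith [hn]
      rw [← hm, ha']
      field_simp
    rw [this] at ht
    have : ((m / n : ℚ) : ℝ) = (m : ℝ) / (n : ℝ) := by push_cast; ring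
    exact (this ▸ ht) ⟨(m / n : ℚ), rfl⟩

/-- Key lemma: if `H` semiconjugates `F` to the translation by `τ F`, `τ F` is irrational,
and `G` commutes with `F`, then `H` semiconjugates `G` to the translation by `τ G`. -/
lemma aux_semiconj_of_commute (F G : CircleDeg1Liftˣ) (H : CircleDeg1Lift)
    (hirr : Irrational (translationNumber (F : CircleDeg1Lift)))
    (hsemi : H * (F : CircleDeg1Lift) =
      ((translate (Multiplicative.ofAdd (translationNumber (F : CircleDeg1Lift)))
        : CircleDeg1Liftˣ) : CircleDeg1Lift) * H)
    (hG : Commute (F : CircleDeg1Lift) (G : CircleDeg1Lift)) :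
    H * (G : CircleDeg1Lift) =
      ((translate (Multiplicative.ofAdd (translationNumber (G : CircleDeg1Lift)))
        : CircleDeg1Liftˣ) : CircleDeg1Lift) * H := by
  set t := translationNumber (F : CircleDeg1Lift) with ht
  -- semiconjugacy for integer powers of F
  have hs : SemiconjBy H (F : CircleDeg1Lift)
      ((translate (Multiplicative.ofAdd t) : CircleDeg1Liftˣ) : CircleDeg1Lift) := hsemi
  have hsn : ∀ n : ℤ, ∀ x : ℝ, H (((F ^ n : CircleDeg1Liftˣ) : CircleDeg1Lift) x)
      = H x + n * t := by
    intro n x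
    have h1 : SemiconjBy H ((F ^ n : CircleDeg1Liftˣ) : CircleDeg1Lift)
        (((translate (Multiplicative.ofAdd t)) ^ n : CircleDeg1Liftˣ) : CircleDeg1Lift) :=
      hs.units_zpow_right n
    have h2 := DFunLike.congr_fun h1.eq x
    rw [CircleDeg1Lift.mul_apply, CircleDeg1Lift.mul_apply] at h2
    rw [h2, translate_zpow, translate_apply]
    ring
  -- commutation of G with integer powers of F
  have hcomm : ∀ n : ℤ, ∀ x : ℝ,
      (G : CircleDeg1Lift) (((F ^ n : CircleDeg1Liftˣ) : CircleDeg1Lift) x)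
        = ((F ^ n : CircleDeg1Liftˣ) : CircleDeg1Lift) ((G : CircleDeg1Lift) x) := by
    intro n x
    have h1 : Commute ((F ^ n : CircleDeg1Liftˣ) : CircleDeg1Lift) (G : CircleDeg1Lift) :=
      hG.units_zpow_left n
    have h2 := DFunLike.congr_fun h1.eq x
    rw [CircleDeg1Lift.mul_apply, CircleDeg1Lift.mul_apply] at h2
    exact h2.symm
  set D : ℝ → ℝ := fun x => H ((G : CircleDeg1Lift) x) - H x with hD
  -- D is monotone-comparison constant: D x ≤ D y for all x y
  have hle : ∀ x y : ℝ, D x ≤ D y := by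
    intro x y
    refine le_of_forall_pos_le_add ?_
    intro ε hε
    -- find s = m • 1 + n • t with H x - H y < s < H x - H y + ε
    have hdense := aux_dense_of_irrational hirr
    obtain ⟨s, hsmem, hs1, hs2⟩ : ∃ s ∈ (AddSubgroup.closure ({1, t} : Set ℝ) : Set ℝ),
        H x - H y < s ∧ s < H x - H y + ε := by
      rcases (dense_iff_exists_between.1 hdense) (H x - H y) (H x - H y + ε)
        (by linarith) with ⟨s, hs, h1, h2⟩
      exact ⟨s, hs, h1, h2⟩
    rw [SetLike.mem_coe, AddSubgroup.mem_closure_pair] at hsmem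
    obtain ⟨m, n, hmn⟩ := hsmem
    -- u = F^n y + m
    set u : ℝ := ((F ^ n : CircleDeg1Liftˣ) : CircleDeg1Lift) y + m with hu
    have hHu : H u = H y + n * t + m := by
      rw [hu, CircleDeg1Lift.map_add_int, hsn]
    have hst : s = n * t + m := by
      rw [← hmn]; simp [zsmul_eq_mul]; ring
    have hxu : H x < H u := by rw [hHu]; rw [hst] at hs1; linarith
    have hxu' : x < u := by
      by_contra h
      push_neg at h
      exact absurd (H.monotone h) (not_le.2 hxu)
    have hGu : H ((G : CircleDeg1Lift) u) = H ((G : CircleDeg1Lift) y) + n * t + m := by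
      rw [hu]
      have : (G : CircleDeg1Lift) (((F ^ n : CircleDeg1Liftˣ) : CircleDeg1Lift) y + (m : ℝ))
          = ((F ^ n : CircleDeg1Liftˣ) : CircleDeg1Lift) ((G : CircleDeg1Lift) y) + m := by
        rw [CircleDeg1Lift.map_add_int, hcomm]
      rw [this, CircleDeg1Lift.map_add_int, hsn]
    have hmono : H ((G : CircleDeg1Lift) x) ≤ H ((G : CircleDeg1Lift) u) :=
      H.monotone ((G : CircleDeg1Lift).monotone hxu'.le)
    have : D x ≤ D y + (n * t + m) - (H x - H y) := by
      simp only [hD]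
      have := hmono.trans_eq hGu
      linarith
    rw [hst] at hs2
    linarith
  have hconst : ∀ x : ℝ, D x = D 0 := fun x => le_antisymm (hle x 0) (hle 0 x)
  set c := D 0 with hc
  have hsemiG : SemiconjBy H (G : CircleDeg1Lift)
      ((translate (Multiplicative.ofAdd c) : CircleDeg1Liftˣ) : CircleDeg1Lift) := by
    ext x
    rw [CircleDeg1Lift.mul_apply, CircleDeg1Lift.mul_apply, CircleDeg1Lift.translate_apply]
    have := hconst x
    simp only [hD] at this
    linarith
  have hτG : translationNumber (G : CircleDeg1Lift) = c := by
    have := translationNumber_eq_of_semiconjBy hsemiG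
    rwa [translationNumber_translate] at this
  rw [hτG]
  exact hsemiG

/-- Let `F` be (a lift of) an orientation-preserving circle
homeomorphism with irrational rotation number `τ F`, semiconjugate to the rigid rotation
by a monotone degree-one map `H` (`H ∘ F = R_{τF} ∘ H`). Then on the centralizer of `F`
(in the group of lifts of circle homeomorphisms) the rotation number is a group
homomorphism to `ℝ/ℤ`: for `G, E` commuting with `F` we have
`ρ(G∘E) = ρ(G) + ρ(E) (mod 1)`; in particular if `ρ(G) = 0` then `ρ(G∘E) = ρ(E)`. -/
theorem translationNumber_hom_on_centralizer (F G E : CircleDeg1Liftˣ)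
    (H : CircleDeg1Lift)
    (hirr : Irrational (translationNumber (F : CircleDeg1Lift)))
    (hsemi : H * (F : CircleDeg1Lift) =
      ((translate (Multiplicative.ofAdd (translationNumber (F : CircleDeg1Lift)))
        : CircleDeg1Liftˣ) : CircleDeg1Lift) * H)
    (hG : Commute (F : CircleDeg1Lift) (G : CircleDeg1Lift))
    (hE : Commute (F : CircleDeg1Lift) (E : CircleDeg1Lift)) :
    ((translationNumber ((G * E : CircleDeg1Liftˣ) : CircleDeg1Lift) : ℝ)
        : AddCircle (1:ℝ)) =
      ((translationNumber (G : CircleDeg1Lift) : ℝ) : AddCircle (1:ℝ)) +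
        ((translationNumber (E : CircleDeg1Lift) : ℝ) : AddCircle (1:ℝ)) ∧
    (((translationNumber (G : CircleDeg1Lift) : ℝ) : AddCircle (1:ℝ)) = 0 →
      ((translationNumber ((G * E : CircleDeg1Liftˣ) : CircleDeg1Lift) : ℝ)
          : AddCircle (1:ℝ)) =
        ((translationNumber (E : CircleDeg1Lift) : ℝ) : AddCircle (1:ℝ))) := by
  have hGsemi := aux_semiconj_of_commute F G H hirr hsemi hG
  have hEsemi := aux_semiconj_of_commute F E H hirr hsemi hE
  set g := translationNumber (G : CircleDeg1Lift) with hg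
  set e := translationNumber (E : CircleDeg1Lift) with he
  have hkey : translationNumber ((G * E : CircleDeg1Liftˣ) : CircleDeg1Lift) = g + e := by
    have hsemiGE : SemiconjBy H ((G * E : CircleDeg1Liftˣ) : CircleDeg1Lift)
        ((translate (Multiplicative.ofAdd (g + e)) : CircleDeg1Liftˣ) : CircleDeg1Lift) := by
      have : translate (Multiplicative.ofAdd (g + e))
          = translate (Multiplicative.ofAdd g) * translate (Multiplicative.ofAdd e) := by
        rw [← map_mul]; rfl
      unfold SemiconjBy
      rw [this, Units.val_mul, Units.val_mul, mul_assoc, ← hEsemi, ← mul_assoc, hGsemi,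
        mul_assoc]
    have := translationNumber_eq_of_semiconjBy hsemiGE
    rwa [translationNumber_translate] at this
  constructor
  · rw [hkey]
    rfl
  · intro h0
    rw [hkey]
    rw [show ((g + e : ℝ) : AddCircle (1:ℝ)) = (g:AddCircle (1:ℝ)) + e from rfl, h0, zero_add]
end
end
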